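/- (The five-dimensional null space of the index form of the flat Y-cone, Theorem 1.2.) For real numbers a₁, a₂, a₃, b₁, b₂, b₃ with b₁ + b₂ + b₃ = 0, the linear triple f = (f₁, f₂, f₃) defined by f_j(x + iy) = a_j x + b_j y is a compatible triple (f₁ + f₂ + f₃ = 0 on γ) and satisfies Q(f) = 0. Moreover, the set of all such triples is a five-dimensional linear subspace of the space of compatible triples. -/

import Mathlib

noncomputable section

/-- The closed half-disk `D̂ = {z : |z| ≤ 1, Re z ≥ 0}`. -/
def Dhat : Set ℂ := {z | ‖z‖ ≤ 1 ∧ 0 ≤ z.re}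

/-- The junction segment `γ = {Re z = 0, |Im z| ≤ 1}`. -/
def gammaJ : Set ℂ := {z | z.re = 0 ∧ |z.im| ≤ 1}

/-- The circular arc `σ = {|z| = 1, Re z ≥ 0}`. -/
def sigmaArc : Set ℂ := {z | ‖z‖ = 1 ∧ 0 ≤ z.re}

/-- The closed unit disk. -/
def Dbar : Set ℂ := {z | ‖z‖ ≤ 1}

/-- x-partial derivative of a map `ℂ → ℝ³`. -/
def vX (u : ℂ → Fin 3 → ℝ) (z : ℂ) : Fin 3 → ℝ :=
  fun k => fderiv ℝ (fun w => u w k) z 1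

/-- y-partial derivative of a map `ℂ → ℝ³`. -/
def vY (u : ℂ → Fin 3 → ℝ) (z : ℂ) : Fin 3 → ℝ :=
  fun k => fderiv ℝ (fun w => u w k) z Complex.I

/-- Laplacian of a real-valued function on `ℂ ≃ ℝ²`. -/
def lap (f : ℂ → ℝ) (z : ℂ) : ℝ :=
  fderiv ℝ (fun w => fderiv ℝ f w 1) z 1 +
    fderiv ℝ (fun w => fderiv ℝ f w Complex.I) z Complex.I

/-- Wirtinger derivative `∂_z = (1/2)(∂_x - i ∂_y)` of a complex-valued function. -/
def dzC (f : ℂ → ℂ) (z : ℂ) : ℂ :=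
  (1/2) * (fderiv ℝ f z 1 - Complex.I * fderiv ℝ f z Complex.I)

/-- `u_{zz} = ∂_z ∂_z u ∈ ℂ³`, componentwise. -/
def uzz (u : ℂ → Fin 3 → ℝ) (z : ℂ) : Fin 3 → ℂ :=
  fun k => dzC (fun w => dzC (fun w' => ((u w' k : ℝ) : ℂ)) w) z

/-- `h(z) = Σ_j u_{j,zz} · u_{j,zz}` (complex-bilinear dot product). -/
def hfun (u : Fin 3 → ℂ → Fin 3 → ℝ) (z : ℂ) : ℂ :=
  ∑ j : Fin 3, ∑ k : Fin 3, (uzz (u j) z k) ^ 2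

/-- Standing hypotheses: conformal free-boundary Y-cone data. -/
def StandingHyp (u : Fin 3 → ℂ → Fin 3 → ℝ) (U : Set ℂ) : Prop :=
  IsOpen U ∧ Dhat ⊆ U ∧
  (∀ j k, ContDiffOn ℝ (⊤ : ℕ∞) (fun z => u j z k) U) ∧
  (∀ j k, ∀ z ∈ U, lap (fun w => u j w k) z = 0) ∧
  (∀ j, ∀ z ∈ Dhat,
      (∑ k : Fin 3, vX (u j) z k * vY (u j) z k) = 0 ∧
      (∑ k : Fin 3, (vX (u j) z k) ^ 2) = (∑ k : Fin 3, (vY (u j) z k) ^ 2) ∧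
      vX (u j) z ≠ 0) ∧
  (∀ z ∈ gammaJ, u 0 z = u 1 z ∧ u 1 z = u 2 z) ∧
  (∀ z ∈ gammaJ, ∀ k, vX (u 0) z k + vX (u 1) z k + vX (u 2) z k = 0) ∧
  (∀ j, ∀ z ∈ sigmaArc,
      (∑ k : Fin 3, (u j z k) ^ 2) = 1 ∧
      ∃ c : ℝ, ∀ k, z.re * vX (u j) z k + z.im * vY (u j) z k = c * u j z k)

/-- The index form of the free-boundary flat Y-cone. -/
def Qform (f : Fin 3 → ℂ → ℝ) : ℝ :=
  ∑ j : Fin 3,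
    ((∫ z in Dhat, ((fderiv ℝ (f j) z 1) ^ 2 + (fderiv ℝ (f j) z Complex.I) ^ 2)) -
      ∫ θ in (-(Real.pi / 2))..(Real.pi / 2), (f j (Complex.exp (θ * Complex.I))) ^ 2)

/-- A compatible triple: each `f j` is C¹ near `D̂` and `f₁+f₂+f₃ = 0` on `γ`. -/
def Compatible (f : Fin 3 → ℂ → ℝ) : Prop :=
  (∀ j, ∃ V : Set ℂ, IsOpen V ∧ Dhat ⊆ V ∧ ContDiffOn ℝ 1 (f j) V) ∧
  ∀ z ∈ gammaJ, f 0 z + f 1 z + f 2 z = 0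

open MeasureTheory in
private lemma hasFDerivAt_lin' (a b : ℝ) (z : ℂ) :
    HasFDerivAt (fun z : ℂ => a * z.re + b * z.im)
      (a • Complex.reCLM + b • Complex.imCLM) z := by
  have h : (fun z : ℂ => a * z.re + b * z.im)
      = ⇑(a • Complex.reCLM + b • Complex.imCLM) := by
    funext w; simp [smul_eq_mul]
  rw [h]; exact (a • Complex.reCLM + b • Complex.imCLM).hasFDerivAt

open MeasureTheory in
private lemma volume_Dhat' : (volume Dhat).toReal = Real.pi / 2 := by
  have hD : Dhat = {z : ℂ | ‖z‖ ≤ 1 ∧ 0 ≤ z.re} := rfl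
  rw [hD]
  set Dp : Set ℂ := {z | ‖z‖ ≤ 1 ∧ 0 ≤ z.re}
  set Dm : Set ℂ := {z | ‖z‖ ≤ 1 ∧ z.re ≤ 0}
  have hDmC : IsClosed Dm :=
    (isClosed_le continuous_norm continuous_const).inter
      (isClosed_le Complex.continuous_re continuous_const)
  have hT : MeasurePreserving (fun z : ℂ => -(starRingEnd ℂ z)) volume volume :=
    (Complex.conjLIE.trans (LinearIsometryEquiv.neg ℝ)).measurePreserving
  have hpre : (fun z : ℂ => -(starRingEnd ℂ z)) ⁻¹' Dm = Dp := by
    ext z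
    simp [Dp, Dm, neg_nonpos, Complex.norm_conj]
  have h1 : volume Dp = volume Dm := by
    rw [← hpre, hT.measure_preimage hDmC.measurableSet.nullMeasurableSet]
  have hunion : Dp ∪ Dm = Metric.closedBall (0:ℂ) 1 := by
    ext z
    simp only [Set.mem_union, Metric.mem_closedBall, Complex.dist_eq, sub_zero, Dp, Dm,
      Set.mem_setOf_eq]
    constructor
    · rintro (⟨h, _⟩ | ⟨h, _⟩) <;> exact h
    · intro h; rcases le_total 0 z.re with h' | h'
      · exact Or.inl ⟨h, h'⟩
      · exact Or.inr ⟨h, h'⟩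
  have hinter : volume (Dp ∩ Dm) = 0 := by
    have hsub : Dp ∩ Dm ⊆ (Submodule.span ℝ {Complex.I} : Submodule ℝ ℂ) := by
      rintro z ⟨⟨_, h1⟩, ⟨_, h2⟩⟩
      have : z.re = 0 := le_antisymm h2 h1
      have : z = z.im • Complex.I := by
        apply Complex.ext <;> simp [this]
      rw [this]
      exact Submodule.smul_mem _ _ (Submodule.subset_span rfl)
    refine measure_mono_null hsub (Measure.addHaar_submodule _ _ ?_)
    intro h
    have : (1:ℂ) ∈ (Submodule.span ℝ {Complex.I} : Submodule ℝ ℂ) := h ▸ Submodule.mem_top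
    rw [Submodule.mem_span_singleton] at this
    obtain ⟨c, hc⟩ := this
    have := congrArg Complex.re hc
    simp at this
  have hMp : MeasurableSet Dp :=
    ((isClosed_le continuous_norm continuous_const).inter
      (isClosed_le continuous_const Complex.continuous_re)).measurableSet
  have key : volume Dp + volume Dp = NNReal.pi := by
    have := measure_union_add_inter Dm hMp (μ := volume)
    rw [Set.union_comm, Set.inter_comm] at this
    rw [hunion, hinter, add_zero, ← h1] at this
    rw [← this, Complex.volume_closedBall]
    simp
  have : volume Dp = NNReal.pi / 2 := by
    have h2 : (2:ENNReal) * volume Dp = NNReal.pi := by rw [two_mul]; exact key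
    rw [← h2, mul_comm, mul_div_assoc, ENNReal.div_self (by norm_num) (by norm_num), mul_one]
  rw [this, ENNReal.toReal_div]
  norm_num [NNReal.coe_real_pi]

private lemma arcint' (a b : ℝ) :
    ∫ θ in (-(Real.pi/2))..(Real.pi/2), (a * Real.cos θ + b * Real.sin θ)^2
      = (a^2 + b^2) * (Real.pi/2) := by
  have h : ∀ θ ∈ Set.uIcc (-(Real.pi/2)) (Real.pi/2),
      (a * Real.cos θ + b * Real.sin θ)^2
        = a^2 * Real.cos θ^2 + ((2*a*b) * (Real.sin θ * Real.cos θ) + b^2 * Real.sin θ^2) := by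
    intro θ _; ring
  rw [intervalIntegral.integral_congr h]
  rw [intervalIntegral.integral_add, intervalIntegral.integral_add,
    intervalIntegral.integral_const_mul, intervalIntegral.integral_const_mul,
    intervalIntegral.integral_const_mul, integral_cos_sq, integral_sin_mul_cos₁,
    integral_sin_sq]
  · simp [Real.sin_pi_div_two, Real.cos_pi_div_two]
    ring
  · exact ((continuous_const.mul (Real.continuous_sin.mul Real.continuous_cos))).intervalIntegrable _ _
  · exact (continuous_const.mul ((Real.continuous_sin.pow 2))).intervalIntegrable _ _
  · exact (continuous_const.mul ((Real.continuous_cos.pow 2))).intervalIntegrable _ _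
  · exact ((continuous_const.mul (Real.continuous_sin.mul Real.continuous_cos)).add
      (continuous_const.mul ((Real.continuous_sin.pow 2)))).intervalIntegrable _ _

private def PhiLin : ((Fin 3 → ℝ) × (Fin 3 → ℝ)) →ₗ[ℝ] (Fin 3 → ℂ → ℝ) where
  toFun p := fun j z => p.1 j * z.re + p.2 j * z.im
  map_add' p q := by funext j z; simp [Pi.add_apply]; ring
  map_smul' c p := by funext j z; simp [Pi.smul_apply, smul_eq_mul]; ring

private def LbLin : ((Fin 3 → ℝ) × (Fin 3 → ℝ)) →ₗ[ℝ] ℝ where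
  toFun p := p.2 0 + p.2 1 + p.2 2
  map_add' p q := by simp [Pi.add_apply]; ring
  map_smul' c p := by simp [Pi.smul_apply, smul_eq_mul]; ring



/-- **The five-dimensional null space of the index form of the flat Y-cone.**
Linear triples `f_j(x+iy) = a_j x + b_j y` with `b₁ + b₂ + b₃ = 0` are
compatible and satisfy `Q(f) = 0`; the set of all such triples is a
five-dimensional subspace of the space of compatible triples. -/

theorem null_space_of_index_form :
    (∀ a b : Fin 3 → ℝ, b 0 + b 1 + b 2 = 0 →
      Compatible (fun j z => a j * z.re + b j * z.im) ∧
      Qform (fun j z => a j * z.re + b j * z.im) = 0) ∧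
    ∃ S : Submodule ℝ (Fin 3 → ℂ → ℝ),
      (S : Set (Fin 3 → ℂ → ℝ)) =
        {f | ∃ a b : Fin 3 → ℝ, b 0 + b 1 + b 2 = 0 ∧
          ∀ j z, f j z = a j * z.re + b j * z.im} ∧
      Module.finrank ℝ S = 5 := by
  constructor
  · intro a b hb
    constructor
    · constructor
      · intro j
        refine ⟨Set.univ, isOpen_univ, Set.subset_univ _, ?_⟩
        have : ContDiff ℝ 1 (fun z : ℂ => a j * z.re + b j * z.im) :=
          (contDiff_const.mul Complex.reCLM.contDiff).add
            (contDiff_const.mul Complex.imCLM.contDiff)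
        exact this.contDiffOn
      · intro z hz
        simp only [hz.1, mul_zero, zero_add]
        linear_combination z.im * hb
    · unfold Qform
      rw [Fin.sum_univ_three]
      have key : ∀ j : Fin 3,
          ((∫ z in Dhat, ((fderiv ℝ (fun z : ℂ => a j * z.re + b j * z.im) z 1) ^ 2 +
              (fderiv ℝ (fun z : ℂ => a j * z.re + b j * z.im) z Complex.I) ^ 2)) -
            ∫ θ in (-(Real.pi / 2))..(Real.pi / 2),
              ((a j * (Complex.exp (θ * Complex.I)).re +
                b j * (Complex.exp (θ * Complex.I)).im)) ^ 2) = 0 := by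
        intro j
        have hfd : ∀ z : ℂ, fderiv ℝ (fun z : ℂ => a j * z.re + b j * z.im) z
            = (a j • Complex.reCLM + b j • Complex.imCLM) :=
          fun z => (hasFDerivAt_lin' (a j) (b j) z).fderiv
        have h1 : (∫ z in Dhat, ((fderiv ℝ (fun z : ℂ => a j * z.re + b j * z.im) z 1) ^ 2 +
              (fderiv ℝ (fun z : ℂ => a j * z.re + b j * z.im) z Complex.I) ^ 2))
            = (a j ^ 2 + b j ^ 2) * (Real.pi / 2) := by
          simp only [hfd]
          rw [MeasureTheory.setIntegral_const]
          simp only [ContinuousLinearMap.add_apply, ContinuousLinearMap.coe_smul',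
            Pi.smul_apply, Complex.reCLM_apply, Complex.imCLM_apply, Complex.one_re,
            Complex.one_im, Complex.I_re, Complex.I_im, smul_eq_mul]
          rw [MeasureTheory.measureReal_def, volume_Dhat']
          ring
        have h2 : (∫ θ in (-(Real.pi / 2))..(Real.pi / 2),
              ((a j * (Complex.exp (θ * Complex.I)).re +
                b j * (Complex.exp (θ * Complex.I)).im)) ^ 2)
            = (a j ^ 2 + b j ^ 2) * (Real.pi / 2) := by
          rw [intervalIntegral.integral_congr
            (g := fun θ : ℝ => (a j * Real.cos θ + b j * Real.sin θ)^2)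
            (fun θ _ => by rw [Complex.exp_ofReal_mul_I_re, Complex.exp_ofReal_mul_I_im])]
          exact arcint' (a j) (b j)
        rw [h1, h2, sub_self]
      rw [key 0, key 1, key 2]
      ring
  · have hinj : Function.Injective PhiLin := by
      rw [← LinearMap.ker_eq_bot, LinearMap.ker_eq_bot']
      intro p hp
      have h1 : ∀ j, p.1 j = 0 := by
        intro j
        have := congrFun (congrFun hp j) 1
        simpa [PhiLin] using this
      have h2 : ∀ j, p.2 j = 0 := by
        intro j
        have := congrFun (congrFun hp j) Complex.I
        simpa [PhiLin] using this
      ext j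
      · exact h1 j
      · exact h2 j
    refine ⟨(LinearMap.ker LbLin).map PhiLin, ?_, ?_⟩
    · ext f
      simp only [Submodule.map_coe, Set.mem_image, SetLike.mem_coe, LinearMap.mem_ker,
        Set.mem_setOf_eq]
      constructor
      · rintro ⟨p, hp, rfl⟩
        exact ⟨p.1, p.2, hp, fun j z => rfl⟩
      · rintro ⟨a, b, hb, hf⟩
        refine ⟨(a, b), hb, ?_⟩
        funext j z
        exact (hf j z).symm
    · rw [← LinearEquiv.finrank_eq (Submodule.equivMapOfInjective PhiLin hinj (LinearMap.ker LbLin))]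
      have hsurj : Function.Surjective LbLin := by
        intro r
        exact ⟨(0, fun i => if i = 0 then r else 0), by simp [LbLin]⟩
      have := LbLin.finrank_range_add_finrank_ker
      rw [LinearMap.range_eq_top.2 hsurj, finrank_top] at this
      simp only [Module.finrank_self] at this
      have hdom : Module.finrank ℝ ((Fin 3 → ℝ) × (Fin 3 → ℝ)) = 6 := by
        simp [Module.finrank_prod]
      omega


end
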